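/- arXiv:1002.1407 — 4 statements merged into one kernel-verified Lean document; each statement's English description precedes it below -/
import Mathlib

section
/- Under the random annex model, the expected size of the intersection of the union of s extended generations with another extended generation equals g(1 - (1-π)^s) + s·h·π·(1-π)^s, where g = h + l and π = l/((n-1)h). -/
/-!
Write `Gᵢ = Bᵢ ∪ Rᵢ`, `U = ⋃_{i ∈ J} Gᵢ` and `q = 1 - π`. Since `Rᵢ` is a uniform `l`-subset of
the `N - h` packets outside `Bᵢ`, a packet `x` avoids `Gᵢ` with probability `q · [x ∉ Bᵢ]`; the
annexes are independent, so `x` avoids `U` with probability `q ^ |J| · [x ∉ ⋃_{i ∈ J} Bᵢ]`, and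
summing over packets gives `E|U| = N - q ^ |J| (N - |J| h)`. Then
`|U ∩ G_k| = |U| + |G_k| - |U ∪ G_k|`, where `|G_k| = h + l` and `U ∪ G_k` is again a union of
extended generations, and `π (N - h) = l` brings the result into the stated form.
-/

open Finset Function
open scoped BigOperators

namespace Finset

variable {ι α : Type*} [Fintype ι] [DecidableEq ι]

theorem expect_piFinset_prod {K : Type*} [Semifield K] [CharZero K] (A : ι → Finset α)
    (f : ι → α → K) :
    𝔼 R ∈ Fintype.piFinset A, ∏ i, f i (R i) = ∏ i, 𝔼 t ∈ A i, f i t := by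
  simp only [expect_eq_sum_div_card, ← prod_univ_sum, Fintype.card_piFinset, Nat.cast_prod,
    prod_div_distrib]

theorem expect_piFinset_prod_of_nonempty {K : Type*} [Semifield K] [CharZero K]
    (A : ι → Finset α) (f : ι → α → K) (J : Finset ι) (hA : ∀ i ∉ J, (A i).Nonempty) :
    𝔼 R ∈ Fintype.piFinset A, ∏ i ∈ J, f i (R i) = ∏ i ∈ J, 𝔼 t ∈ A i, f i t := by
  calc 𝔼 R ∈ Fintype.piFinset A, ∏ i ∈ J, f i (R i)
      = ∏ i, 𝔼 t ∈ A i, if i ∈ J then f i t else 1 := by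
        simpa only [prod_ite_mem, univ_inter] using
          expect_piFinset_prod A fun i t => if i ∈ J then f i t else 1
    _ = ∏ i, if i ∈ J then 𝔼 t ∈ A i, f i t else 1 := by
        refine prod_congr rfl fun i _ => ?_
        split_ifs with hi
        · rfl
        · exact expect_const (hA i hi) 1
    _ = ∏ i ∈ J, 𝔼 t ∈ A i, f i t := by rw [prod_ite_mem, univ_inter]

theorem cast_card_compl_biUnion {R : Type*} [CommSemiring R] [Fintype α] [DecidableEq α]
    (J : Finset ι) (G : ι → Finset α) :
    (#(J.biUnion G)ᶜ : R) = ∑ x, ∏ i ∈ J, if x ∉ G i then 1 else 0 := by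
  calc (#(J.biUnion G)ᶜ : R) = ∑ x, if x ∈ (J.biUnion G)ᶜ then 1 else 0 := by
        rw [sum_ite_mem, univ_inter, sum_const, nsmul_one]
    _ = _ := sum_congr rfl fun x _ => by rw [prod_boole]; simp

theorem expect_powersetCard_notMem {K : Type*} [Field K] [CharZero K] [DecidableEq α]
    {S : Finset α} {x : α} (hx : x ∈ S) {l : ℕ} (hl : l ≤ #S) :
    𝔼 T ∈ S.powersetCard l, (if x ∉ T then 1 else 0 : K) = 1 - (l : K) / #S := by
  have hS : (#S : K) ≠ 0 := Nat.cast_ne_zero.mpr (card_ne_zero_of_mem hx)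
  have hc : ((#S).choose l : K) ≠ 0 := Nat.cast_ne_zero.mpr (Nat.choose_pos hl).ne'
  have hnotMem : {T ∈ S.powersetCard l | x ∉ T} = (S.erase x).powersetCard l := by
    ext T
    simp only [mem_filter, mem_powersetCard, subset_erase]
    tauto
  have hchoose := Nat.choose_mul_succ_eq (#S - 1) l
  rw [Nat.sub_add_cancel (card_pos.mpr ⟨x, hx⟩)] at hchoose
  rw [expect_eq_sum_div_card, sum_boole, hnotMem, card_powersetCard, card_powersetCard,
    card_erase_of_mem hx, div_eq_iff hc, one_sub_div hS, div_mul_eq_mul_div, eq_div_iff hS,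
    ← Nat.cast_sub hl]
  exact_mod_cast hchoose.trans (mul_comm _ _)

end Finset

section RandomAnnex

variable {α : Type*} [Fintype α] [DecidableEq α] {h l : ℕ}

theorem powersetCard_compl_nonempty {S : Finset α} (hS : #S = h)
    (hl : l + h ≤ Fintype.card α) : (Sᶜ.powersetCard l).Nonempty := by
  rw [powersetCard_nonempty, card_compl, hS]
  omega

theorem expect_notMem_union_annex {S : Finset α} (hS : #S = h) (hl : l + h ≤ Fintype.card α)
    (x : α) :
    𝔼 T ∈ Sᶜ.powersetCard l, (if x ∉ S ∪ T then 1 else 0 : ℝ) =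
      if x ∉ S then 1 - l / ((Fintype.card α : ℝ) - h) else 0 := by
  by_cases hx : x ∈ S
  · simp [hx]
  · have hcard : ((#Sᶜ : ℕ) : ℝ) = Fintype.card α - h := by
      rw [card_compl, hS, Nat.cast_sub (by omega)]
    rw [if_pos hx, ← hcard, ← expect_powersetCard_notMem (mem_compl.mpr hx)
      (by rw [card_compl, hS]; omega)]
    exact expect_congr rfl fun T _ => by simp [hx]

variable {ι : Type*} [Fintype ι] [DecidableEq ι]

def annexChoices (B : ι → Finset α) (l : ℕ) : Finset (ι → Finset α) :=
  Fintype.piFinset fun i => (B i)ᶜ.powersetCard l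

variable {B : ι → Finset α} {π : ℝ}

theorem mem_annexChoices {R : ι → Finset α} :
    R ∈ annexChoices B l ↔ ∀ i, R i ⊆ (B i)ᶜ ∧ #(R i) = l := by
  simp only [annexChoices, Fintype.mem_piFinset, mem_powersetCard]

theorem annexChoices_nonempty (hB : ∀ i, #(B i) = h) (hl : l + h ≤ Fintype.card α) :
    (annexChoices B l).Nonempty :=
  Fintype.piFinset_nonempty.mpr fun i => powersetCard_compl_nonempty (hB i) hl

theorem card_union_annex {R : ι → Finset α} (hR : R ∈ annexChoices B l) (k : ι) :
    #(B k ∪ R k) = #(B k) + l := by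
  obtain ⟨hsub, hcard⟩ := mem_annexChoices.mp hR k
  rw [card_union_of_disjoint (disjoint_of_subset_right hsub disjoint_compl_right), hcard]

theorem expect_card_compl_biUnion_annex (hB : ∀ i, #(B i) = h) (hl : l + h ≤ Fintype.card α)
    (hπ : π = l / ((Fintype.card α : ℝ) - h)) (J : Finset ι) :
    𝔼 R ∈ annexChoices B l, (#(J.biUnion fun i => B i ∪ R i)ᶜ : ℝ) =
      (1 - π) ^ #J * #(J.biUnion B)ᶜ := by
  simp_rw [cast_card_compl_biUnion, mul_sum]
  rw [expect_sum_comm]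
  refine sum_congr rfl fun x _ => ?_
  rw [annexChoices, expect_piFinset_prod_of_nonempty _
    (fun i t => if x ∉ B i ∪ t then (1 : ℝ) else 0) _
    fun i _ => powersetCard_compl_nonempty (hB i) hl, ← prod_const, ← prod_mul_distrib]
  refine prod_congr rfl fun i _ => ?_
  rw [expect_notMem_union_annex (hB i) hl, hπ]
  split_ifs <;> simp

theorem expect_card_biUnion_annex (hB : ∀ i, #(B i) = h) (hBdisj : Pairwise (Disjoint on B))
    (hl : l + h ≤ Fintype.card α) (hπ : π = l / ((Fintype.card α : ℝ) - h)) (J : Finset ι) :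
    𝔼 R ∈ annexChoices B l, (#(J.biUnion fun i => B i ∪ R i) : ℝ) =
      Fintype.card α - (1 - π) ^ #J * (Fintype.card α - #J * h) := by
  have hcompl (G : ι → Finset α) :
      (#(J.biUnion G) : ℝ) = Fintype.card α - #(J.biUnion G)ᶜ := by
    rw [eq_sub_iff_add_eq, ← Nat.cast_add, card_add_card_compl]
  have hBunion : (#(J.biUnion B) : ℝ) = #J * h := by
    rw [card_biUnion fun i _ j _ hij => hBdisj hij, sum_const_nat fun i _ => hB i, Nat.cast_mul]
  simp_rw [hcompl]
  rw [expect_sub_distrib, expect_const (annexChoices_nonempty hB hl),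
    expect_card_compl_biUnion_annex hB hl hπ, ← hBunion, hcompl B, sub_sub_cancel]

theorem expect_card_biUnion_inter_annex (hB : ∀ i, #(B i) = h)
    (hBdisj : Pairwise (Disjoint on B)) (hl : l + h ≤ Fintype.card α)
    (hπ : π = l / ((Fintype.card α : ℝ) - h)) {J : Finset ι} {k : ι} (hk : k ∉ J) :
    𝔼 R ∈ annexChoices B l, (#((J.biUnion fun i => B i ∪ R i) ∩ (B k ∪ R k)) : ℝ) =
      (h + l) * (1 - (1 - π) ^ #J) + #J * h * π * (1 - π) ^ #J := by
  have hinter : ∀ R ∈ annexChoices B l,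
      (#((J.biUnion fun i => B i ∪ R i) ∩ (B k ∪ R k)) : ℝ) =
        #(J.biUnion fun i => B i ∪ R i) + (h + l)
          - #((insert k J).biUnion fun i => B i ∪ R i) := by
    intro R hR
    rw [eq_sub_iff_add_eq', biUnion_insert, union_comm, ← hB k, ← Nat.cast_add, ← Nat.cast_add,
      ← card_union_annex hR, card_union_add_card_inter, Nat.cast_add]
  have hπl : π * ((Fintype.card α : ℝ) - h) = l := by
    rcases eq_or_ne ((Fintype.card α : ℝ) - h) 0 with h0 | h0
    · have : (l : ℝ) + h ≤ Fintype.card α := by exact_mod_cast hl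
      rw [h0, mul_zero]
      linarith [(Nat.cast_nonneg l : (0 : ℝ) ≤ l)]
    · rw [hπ, div_mul_cancel₀ _ h0]
  rw [expect_congr rfl hinter, expect_sub_distrib, expect_add_distrib,
    expect_const (annexChoices_nonempty hB hl), expect_card_biUnion_annex hB hBdisj hl hπ,
    expect_card_biUnion_annex hB hBdisj hl hπ, card_insert_of_notMem hk]
  push_cast
  linear_combination -(1 - π) ^ #J * hπl

end RandomAnnex

theorem stmt_5_general (n h l s : ℕ) (hl : l ≤ (n - 1) * h)
    (hs : s < n)
    (B : Fin n → Finset (Fin (n * h))) (hBcard : ∀ i, (B i).card = h)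
    (hBdisj : ∀ i j, i ≠ j → Disjoint (B i) (B j)) :
    let π : ℝ := (l : ℝ) / (((n : ℝ) - 1) * (h : ℝ))
    let Ω : Finset (Fin n → Finset (Fin (n * h))) :=
      Finset.univ.filter fun R => ∀ i, R i ⊆ (B i)ᶜ ∧ (R i).card = l
    (∑ R ∈ Ω,
        ((((Finset.univ.filter fun i : Fin n => (i : ℕ) < s).biUnion
            (fun i => B i ∪ R i)) ∩ (B ⟨s, hs⟩ ∪ R ⟨s, hs⟩)).card : ℝ)) / (Ω.card : ℝ)
      = ((h : ℝ) + l) * (1 - (1 - π) ^ s) + (s : ℝ) * h * π * (1 - π) ^ s := by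
  intro π Ω
  have hΩ : Ω = annexChoices B l := by
    ext R
    simp [Ω, mem_annexChoices]
  have hlh : l + h ≤ Fintype.card (Fin (n * h)) := by
    have hhn : h ≤ n * h := Nat.le_mul_of_pos_left h (by omega)
    rw [Fintype.card_fin]
    rw [Nat.sub_one_mul] at hl
    omega
  have hπ : π = l / ((Fintype.card (Fin (n * h)) : ℝ) - h) := by
    simp only [π, Fintype.card_fin, Nat.cast_mul]
    ring
  have hJ : #{i : Fin n | (i : ℕ) < s} = s := by simp [Fin.card_filter_val_lt, hs.le]
  rw [hΩ, ← expect_eq_sum_div_card, expect_card_biUnion_inter_annex hBcard hBdisj hlh hπ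
    (by simp), hJ]

/-- Random annex model: `N = n·h` packets, base generations `B i` of size `h`
partitioning the packets, annexes chosen independently and uniformly among the
`l`-subsets of the complement of the corresponding base generation.  The expected
size of the intersection of the union of the first `s` extended generations with the
`(s+1)`-th one equals `g(1-(1-π)^s) + s·h·π·(1-π)^s`, where `g = h + l` and
`π = l/((n-1)h)`. -/
theorem stmt_5 (n h l s : ℕ) (hn : 2 ≤ n) (hh : 0 < h) (hl : l ≤ (n - 1) * h)
    (hs : s < n)
    (B : Fin n → Finset (Fin (n * h))) (hBcard : ∀ i, (B i).card = h)
    (hBdisj : ∀ i j, i ≠ j → Disjoint (B i) (B j)) :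
    let π : ℝ := (l : ℝ) / (((n : ℝ) - 1) * (h : ℝ))
    let Ω : Finset (Fin n → Finset (Fin (n * h))) :=
      Finset.univ.filter fun R => ∀ i, R i ⊆ (B i)ᶜ ∧ (R i).card = l
    (∑ R ∈ Ω,
        ((((Finset.univ.filter fun i : Fin n => (i : ℕ) < s).biUnion
            (fun i => B i ∪ R i)) ∩ (B ⟨s, hs⟩ ∪ R ⟨s, hs⟩)).card : ℝ)) / (Ω.card : ℝ)
      = ((h : ℝ) + l) * (1 - (1 - π) ^ s) + (s : ℝ) * h * π * (1 - π) ^ s :=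
  stmt_5_general n h l s hl hs B hBcard hBdisj
end

section
/- The sum ∑_{j=0}^{k-1} 1/(1 - q^{j-k}) is bounded above by k + q^{-1}/(1-q^{-1}) + log_q((1 - q^{-k})/(1 - q^{-1})). -/
/-!
Writing `x = q⁻¹`, the sum is `∑_{m=1}^{k} (1 - x^m)⁻¹`. The term `m = 1` equals
`1 + x / (1 - x)`, and each later term is at most `1 + log_q ((1 - x^m) / (1 - x^(m-1)))`
(two applications of `log y ≤ y - 1`), the discrete form of comparing the sum with
`∫ dy / (1 - q^(y-k))`. These logarithms telescope.
-/

open Finset Real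

lemma inv_one_sub_le_one_add_logb {q a : ℝ} (hq : 1 < q) (ha : 0 ≤ a) (hqa : q * a < 1) :
    (1 - a)⁻¹ ≤ 1 + logb q ((1 - a) / (1 - q * a)) := by
  have ha1 : 0 < 1 - a := by nlinarith
  have hqa1 : 0 < 1 - q * a := by linarith
  have hlog : a / (1 - a) * log q ≤ log ((1 - a) / (1 - q * a)) :=
    calc a / (1 - a) * log q ≤ a / (1 - a) * (q - 1) := by
          gcongr
          linarith [log_le_sub_one_of_pos (zero_lt_one.trans hq)]
      _ = 1 - (1 - q * a) / (1 - a) := by field_simp; ring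
      _ ≤ -log ((1 - q * a) / (1 - a)) := by
          linarith [log_le_sub_one_of_pos (div_pos hqa1 ha1)]
      _ = log ((1 - a) / (1 - q * a)) := by rw [← log_inv, inv_div]
  have hdiv : a / (1 - a) ≤ logb q ((1 - a) / (1 - q * a)) :=
    (le_div_iff₀ (log_pos hq)).2 hlog
  have hinv : (1 - a)⁻¹ = 1 + a / (1 - a) := by field_simp; ring
  linarith

lemma sum_range_inv_one_sub_inv_pow_le {q : ℝ} (hq : 1 < q) (n : ℕ) :
    ∑ m ∈ range (n + 1), (1 - q⁻¹ ^ (m + 1))⁻¹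
      ≤ (n + 1 : ℝ) + q⁻¹ / (1 - q⁻¹) + logb q ((1 - q⁻¹ ^ (n + 1)) / (1 - q⁻¹)) := by
  have hq0 : 0 < q := zero_lt_one.trans hq
  have hpow_lt (m : ℕ) : q⁻¹ ^ (m + 1) < 1 :=
    pow_lt_one₀ (by positivity) (inv_lt_one_of_one_lt₀ hq) m.succ_ne_zero
  have hne (m : ℕ) : 1 - q⁻¹ ^ (m + 1) ≠ 0 := (sub_pos.2 (hpow_lt m)).ne'
  have hne₀ : 1 - q⁻¹ ≠ 0 := pow_one q⁻¹ ▸ hne 0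
  induction n with
  | zero =>
    simp only [zero_add, sum_range_one, pow_one, div_self hne₀, logb_one, add_zero, Nat.cast_zero]
    rw [one_add_div hne₀, sub_add_cancel, one_div]
  | succ n ih =>
    have hshift : q * q⁻¹ ^ (n + 2) = q⁻¹ ^ (n + 1) := by
      rw [pow_succ' _ (n + 1), ← mul_assoc, mul_inv_cancel₀ hq0.ne', one_mul]
    have hstep := inv_one_sub_le_one_add_logb hq (a := q⁻¹ ^ (n + 2)) (by positivity)
      (hshift ▸ hpow_lt n)
    rw [hshift] at hstep
    have htelescope : logb q ((1 - q⁻¹ ^ (n + 1)) / (1 - q⁻¹))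
        + logb q ((1 - q⁻¹ ^ (n + 2)) / (1 - q⁻¹ ^ (n + 1)))
        = logb q ((1 - q⁻¹ ^ (n + 2)) / (1 - q⁻¹)) := by
      rw [logb_div (hne n) hne₀, logb_div (hne (n + 1)) (hne n), logb_div (hne (n + 1)) hne₀]
      ring
    rw [sum_range_succ, Nat.cast_succ, ← htelescope]
    linarith

lemma sum_range_inv_one_sub_rpow_sub_eq {q : ℝ} (hq : 0 < q) (k : ℕ) :
    ∑ j ∈ range k, (1 - q ^ ((j : ℝ) - k))⁻¹ = ∑ m ∈ range k, (1 - q⁻¹ ^ (m + 1))⁻¹ := by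
  rw [← sum_range_reflect]
  refine sum_congr rfl fun j hj => ?_
  have hjk : j < k := mem_range.1 hj
  rw [show ((k - 1 - j : ℕ) : ℝ) - k = -((j + 1 : ℕ) : ℝ) by
      push_cast [Nat.cast_sub (by omega : 1 + j ≤ k), Nat.sub_sub]; ring,
    rpow_neg hq.le, rpow_natCast, inv_pow]

/-- For real `q > 1` and `k ≥ 1`,
`∑_{j=0}^{k-1} 1/(1 - q^{j-k}) ≤ k + q⁻¹/(1-q⁻¹) + log_q((1 - q^{-k})/(1 - q^{-1}))`. -/
theorem stmt_10 (q : ℝ) (hq : 1 < q) (k : ℕ) (hk : 1 ≤ k) :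
    ∑ j ∈ Finset.range k, (1 - q ^ ((j : ℝ) - (k : ℝ)))⁻¹
      ≤ (k : ℝ) + q⁻¹ / (1 - q⁻¹)
        + Real.logb q ((1 - q ^ (-(k : ℝ))) / (1 - q ^ (-(1 : ℝ)))) := by
  obtain ⟨n, rfl⟩ := Nat.exists_eq_add_of_le' hk
  have hq0 : 0 < q := zero_lt_one.trans hq
  rw [sum_range_inv_one_sub_rpow_sub_eq hq0, rpow_neg_one, rpow_neg hq0.le, rpow_natCast,
    ← inv_pow, Nat.cast_succ]
  exact sum_range_inv_one_sub_inv_pow_le hq n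
end

section
/- In the coupon collector setting with n equally likely coupon types, the expected number of samples T until some coupon type has been drawn m times satisfies E[T] = n ∫_0^∞ (S_m(x))^n e^{-nx} dx. -/
open MeasureTheory

/-- Partial exponential sum `S_m(x) = ∑_{i=0}^{m-1} x^i/i!`. -/
noncomputable def expS (m : ℕ) (x : ℝ) : ℝ :=
  ∑ i ∈ Finset.range m, x ^ i / (Nat.factorial i : ℝ)

section Aux

open Finset Set


/-- number of occurrences of value `c` in the tuple `g` -/
def cnt {t n : ℕ} (g : Fin t → Fin n) (c : Fin n) : ℕ :=
  (Finset.univ.filter (fun i => g i = c)).card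

lemma cnt_sum {t n : ℕ} (g : Fin t → Fin n) : ∑ c, cnt g c = t := by
  classical
  simpa [cnt] using (Finset.card_eq_sum_card_fiberwise
    (f := g) (s := Finset.univ) (t := Finset.univ) (fun x _ => Finset.mem_univ _)).symm

lemma cnt_snoc {t n : ℕ} (h : Fin t → Fin n) (c c' : Fin n) :
    cnt (Fin.snoc h c) c' = cnt h c' + (if c = c' then 1 else 0) := by
  classical
  simp only [cnt, Finset.card_filter]
  rw [Fin.sum_univ_castSucc]
  simp [Fin.snoc_castSucc, Fin.snoc_last]

/-- multinomial counting: the number of tuples with prescribed value-counts. -/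
lemma card_cnt_eq {n : ℕ} : ∀ (t : ℕ) (f : Fin n → ℕ), (∑ c, f c = t) →
    ((Finset.univ.filter (fun g : Fin t → Fin n => ∀ c, cnt g c = f c)).card
        * ∏ c, (f c).factorial) = t.factorial := by
  classical
  intro t
  induction t with
  | zero =>
    intro f hf
    have hf0 : ∀ c, f c = 0 := by
      intro c
      exact (Finset.sum_eq_zero_iff.mp hf) c (Finset.mem_univ c)
    have : (Finset.univ.filter (fun g : Fin 0 → Fin n => ∀ c, cnt g c = f c)) = Finset.univ := by
      apply Finset.filter_true_of_mem
      intro g _ c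
      rw [hf0 c]
      simp [cnt]
    rw [this]
    simp [hf0]
  | succ t ih =>
    intro f hf
    have key : ∀ c : Fin n,
        ((Finset.univ.filter (fun g : Fin (t+1) → Fin n => ∀ c', cnt g c' = f c')).filter
            (fun g => g (Fin.last t) = c)).card * ∏ c', (f c').factorial
          = f c * t.factorial := by
      intro c
      by_cases hc : f c = 0
      · have : ((Finset.univ.filter (fun g : Fin (t+1) → Fin n => ∀ c', cnt g c' = f c')).filter
            (fun g => g (Fin.last t) = c)) = ∅ := by
          apply Finset.eq_empty_of_forall_notMem
          intro g hg
          simp only [Finset.mem_filter, Finset.mem_univ, true_and] at hg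
          obtain ⟨h1, h2⟩ := hg
          have : 0 < cnt g c :=
            Finset.card_pos.mpr ⟨Fin.last t, Finset.mem_filter.mpr ⟨Finset.mem_univ _, h2⟩⟩
          have := h1 c
          omega
        rw [this]
        simp [hc]
      · obtain ⟨f', hf'⟩ : ∃ f', f' = Function.update f c (f c - 1) := ⟨_, rfl⟩
        have hupd : ∀ c', f' c' = if c' = c then f c - 1 else f c' := by
          intro c'
          simp [hf', Function.update_apply]
        have h1 : ∏ c', (f' c').factorial
            = (f c - 1).factorial * ∏ c' ∈ Finset.univ \ {c}, (f c').factorial := by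
          calc ∏ c', (f' c').factorial
              = ∏ c', Function.update (fun c'' => (f c'').factorial) c (f c - 1).factorial c' :=
                Finset.prod_congr rfl (fun c' _ => by
                  rw [hupd c', Function.update_apply]
                  split <;> rfl)
            _ = _ := Finset.prod_update_of_mem (Finset.mem_univ c) _ _
        have h2 : ∏ c', (f c').factorial
            = (f c).factorial * ∏ c' ∈ Finset.univ \ {c}, (f c').factorial := by
          rw [Finset.sdiff_singleton_eq_erase]
          exact (Finset.mul_prod_erase _ _ (Finset.mem_univ c)).symm
        have h3 : (f c).factorial = f c * (f c - 1).factorial := by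
          obtain ⟨k, hk⟩ : ∃ k, f c = k + 1 := ⟨f c - 1, by omega⟩
          rw [hk]
          simp [Nat.factorial_succ]
        have hsum' : ∑ c', f' c' = t := by
          have h4 : ∑ c', f' c' = (f c - 1) + ∑ c' ∈ Finset.univ \ {c}, f c' := by
            rw [hf']
            exact Finset.sum_update_of_mem (Finset.mem_univ c) f (f c - 1)
          have h5 : f c + ∑ c' ∈ Finset.univ \ {c}, f c' = t + 1 := by
            rw [Finset.sdiff_singleton_eq_erase, Finset.add_sum_erase _ _ (Finset.mem_univ c)]
            exact hf
          omega
        have hbij : ((Finset.univ.filter (fun g : Fin (t+1) → Fin n => ∀ c', cnt g c' = f c')).filter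
            (fun g => g (Fin.last t) = c)).card
            = (Finset.univ.filter (fun h : Fin t → Fin n => ∀ c', cnt h c' = f' c')).card := by
          refine Finset.card_bij' (fun g _ => Fin.init g) (fun h _ => Fin.snoc h c)
            ?hi ?hj ?left ?right
          case hi =>
            intro g hg
            simp only [Finset.mem_filter, Finset.mem_univ, true_and] at hg ⊢
            obtain ⟨h1, h2⟩ := hg
            intro c'
            have hgsnoc : cnt g c' = cnt (Fin.init g) c' + (if c = c' then 1 else 0) := by
              conv_lhs => rw [← Fin.snoc_init_self g, h2]
              exact cnt_snoc _ _ _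
            rw [h1 c'] at hgsnoc
            rw [hupd c']
            by_cases hcc : c = c'
            · subst hcc
              rw [if_pos rfl]
              rw [if_pos rfl] at hgsnoc
              omega
            · rw [if_neg (Ne.symm hcc)]
              rw [if_neg hcc] at hgsnoc
              omega
          case hj =>
            intro h hh
            simp only [Finset.mem_filter, Finset.mem_univ, true_and] at hh ⊢
            refine ⟨fun c' => ?_, Fin.snoc_last _ _⟩
            rw [cnt_snoc, hh c', hupd c']
            by_cases hcc : c = c'
            · subst hcc
              rw [if_pos rfl, if_pos rfl]
              omega
            · rw [if_neg (Ne.symm hcc), if_neg hcc]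
              omega
          case left =>
            intro g hg
            simp only [Finset.mem_filter, Finset.mem_univ, true_and] at hg
            show Fin.snoc (Fin.init g) c = g
            rw [← hg.2]
            exact Fin.snoc_init_self g
          case right =>
            intro h _
            exact Fin.init_snoc _ _
        rw [hbij]
        calc (Finset.univ.filter (fun h : Fin t → Fin n => ∀ c', cnt h c' = f' c')).card
              * ∏ c', (f c').factorial
            = (Finset.univ.filter (fun h : Fin t → Fin n => ∀ c', cnt h c' = f' c')).card
              * ((f c).factorial * ∏ c' ∈ Finset.univ \ {c}, (f c').factorial) := by rw [← h2]
          _ = f c * ((Finset.univ.filter (fun h : Fin t → Fin n => ∀ c', cnt h c' = f' c')).card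
              * ∏ c', (f' c').factorial) := by rw [h1, h3]; ring
          _ = f c * t.factorial := by rw [ih f' hsum']
    have hcard : (Finset.univ.filter (fun g : Fin (t+1) → Fin n => ∀ c, cnt g c = f c)).card
        = ∑ c : Fin n, ((Finset.univ.filter (fun g : Fin (t+1) → Fin n => ∀ c', cnt g c' = f c')).filter
            (fun g => g (Fin.last t) = c)).card :=
      Finset.card_eq_sum_card_fiberwise (fun x _ => Finset.mem_univ _)
    rw [hcard, Finset.sum_mul]
    rw [Finset.sum_congr rfl (fun c _ => key c), ← Finset.sum_mul, hf]
    rw [Nat.factorial_succ]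



section Meas
variable {n : ℕ}

lemma count_eq_cnt (ω : ℕ → Fin n) (t : ℕ) (c : Fin n) :
    ((Finset.range t).filter (fun i => ω i = c)).card
      = cnt (fun i : Fin t => ω i) c := by
  classical
  simp only [cnt, Finset.card_filter]
  exact (Fin.sum_univ_eq_sum_range (fun i => if ω i = c then 1 else 0) t).symm

lemma pigeon {m t : ℕ} (hm : 1 ≤ m) (ht : n * (m - 1) < t) (g : Fin t → Fin n) :
    ∃ c, m ≤ cnt g c := by
  by_contra hcon
  push_neg at hcon
  have : ∑ c, cnt g c ≤ ∑ _c : Fin n, (m - 1) := by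
    apply Finset.sum_le_sum
    intro c _
    have := hcon c
    omega
  rw [Finset.sum_const, Finset.card_univ, Fintype.card_fin, smul_eq_mul] at this
  rw [cnt_sum g] at this
  omega

/-- extension of a tuple to a full sequence -/
def extSeq (hn : 0 < n) {t : ℕ} (g : Fin t → Fin n) : ℕ → Fin n :=
  fun i => if h : i < t then g ⟨i, h⟩ else ⟨0, hn⟩

lemma tail_iff {m : ℕ} (hn : 0 < n) (hm : 1 ≤ m) (ω : ℕ → Fin n) (t : ℕ) :
    (t < sInf {t : ℕ | ∃ c : Fin n,
        m ≤ ((Finset.range t).filter (fun i => ω i = c)).card})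
      ↔ ∀ c, ((Finset.range t).filter (fun i => ω i = c)).card < m := by
  classical
  set S := {t : ℕ | ∃ c : Fin n, m ≤ ((Finset.range t).filter (fun i => ω i = c)).card} with hS
  have hmono : ∀ {a b : ℕ}, a ≤ b → a ∈ S → b ∈ S := by
    intro a b hab ⟨c, hc⟩
    exact ⟨c, le_trans hc (Finset.card_le_card (Finset.filter_subset_filter _
      (Finset.range_subset_range.mpr hab)))⟩
  have hne : S.Nonempty := by
    refine ⟨n * (m - 1) + 1, ?_⟩
    obtain ⟨c, hc⟩ := pigeon hm (Nat.lt_succ_self _) (fun i : Fin (n * (m - 1) + 1) => ω i)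
    exact ⟨c, by rw [count_eq_cnt]; exact hc⟩
  constructor
  · intro h c
    by_contra hcon
    push_neg at hcon
    have : t ∈ S := ⟨c, hcon⟩
    exact absurd (Nat.sInf_le this) (by omega)
  · intro h
    by_contra hcon
    push_neg at hcon
    have : t ∈ S := hmono hcon (Nat.sInf_mem hne)
    obtain ⟨c, hc⟩ := this
    exact absurd hc (by exact Nat.not_le.mpr (h c))

variable [MeasurableSpace (Fin n)]

lemma cyl_measurable (hms : ∀ s : Set (Fin n), MeasurableSet s) {t : ℕ} (v : ℕ → Fin n) :
    MeasurableSet {ω : ℕ → Fin n | ∀ i ∈ Finset.range t, ω i = v i} := by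
  have : {ω : ℕ → Fin n | ∀ i ∈ Finset.range t, ω i = v i}
      = ⋂ i ∈ (Finset.range t : Set ℕ), {ω : ℕ → Fin n | ω i = v i} := by
    ext ω
    simp [Set.mem_iInter]
  rw [this]
  exact MeasurableSet.biInter ((Finset.range t : Set ℕ).to_countable)
    (fun i _ => show MeasurableSet ((fun ω : ℕ → Fin n => ω i) ⁻¹' {v i}) from
      (measurable_pi_apply i) (hms _))

lemma event_eq (hn : 0 < n) {m t : ℕ} :
    {ω : ℕ → Fin n | ∀ c, ((Finset.range t).filter (fun i => ω i = c)).card < m}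
      = ⋃ g ∈ (Finset.univ.filter (fun g : Fin t → Fin n => ∀ c, cnt g c < m)),
          {ω : ℕ → Fin n | ∀ i ∈ Finset.range t, ω i = extSeq hn g i} := by
  classical
  ext ω
  simp only [Set.mem_setOf_eq, Set.mem_iUnion, Finset.mem_filter, Finset.mem_univ, true_and]
  constructor
  · intro h
    refine ⟨fun i : Fin t => ω i, fun c => ?_, fun i hi => ?_⟩
    · rw [← count_eq_cnt]; exact h c
    · rw [Finset.mem_range] at hi
      simp [extSeq, dif_pos hi]
  · rintro ⟨g, hg, hω⟩
    have hrestrict : (fun i : Fin t => ω i) = g := by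
      funext i
      have := hω i (Finset.mem_range.mpr i.isLt)
      rw [this]
      simp [extSeq, dif_pos i.isLt]
    intro c
    rw [count_eq_cnt, hrestrict]
    exact hg c

lemma event_measure (hms : ∀ s : Set (Fin n), MeasurableSet s) (hn : 0 < n) {m t : ℕ}
    (μ : Measure (ℕ → Fin n))
    (hiid : ∀ (S : Finset ℕ) (v : ℕ → Fin n),
      μ {ω | ∀ i ∈ S, ω i = v i} = ((1 : ENNReal) / (n : ENNReal)) ^ S.card) :
    μ {ω : ℕ → Fin n | ∀ c, ((Finset.range t).filter (fun i => ω i = c)).card < m}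
      = ((Finset.univ.filter (fun g : Fin t → Fin n => ∀ c, cnt g c < m)).card : ENNReal)
        * ((1 : ENNReal) / (n : ENNReal)) ^ t := by
  classical
  rw [event_eq hn]
  rw [measure_biUnion_finset ?hd (fun g _ => cyl_measurable hms _)]
  · rw [Finset.sum_congr rfl (fun g _ => by
      rw [hiid (Finset.range t) (extSeq hn g), Finset.card_range])]
    rw [Finset.sum_const, nsmul_eq_mul]
  case hd =>
    intro g hg g' hg' hne
    simp only [Function.onFun]
    rw [Set.disjoint_left]
    intro ω hω hω'
    apply hne
    funext i
    have h1 := hω i (Finset.mem_range.mpr i.isLt)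
    have h2 := hω' i (Finset.mem_range.mpr i.isLt)
    have : extSeq hn g i = extSeq hn g' i := by rw [← h1, ← h2]
    simpa [extSeq, dif_pos i.isLt] using this

end Meas


lemma integrableOn_pow_mul_exp (t : ℕ) {b : ℝ} (hb : 0 < b) :
    IntegrableOn (fun x : ℝ => x ^ t * Real.exp (-b * x)) (Set.Ioi 0) := by
  apply integrable_of_isBigO_exp_neg (b := b / 2) (by positivity)
  · exact ((continuous_pow t).mul (Real.continuous_exp.comp
      (continuous_const.mul continuous_id))).continuousOn
  · rw [Asymptotics.isBigO_iff]
    refine ⟨1, ?_⟩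
    have h1 := Metric.tendsto_nhds.mp
      (tendsto_rpow_mul_exp_neg_mul_atTop_nhds_zero t (b/2) (by positivity)) 1 one_pos
    filter_upwards [h1, Filter.eventually_ge_atTop (1:ℝ)] with x hx' hx1
    have hx : |x ^ (t:ℝ) * Real.exp (-(b/2) * x)| < 1 := by
      rwa [Real.dist_eq, sub_zero] at hx'
    have hx0 : (0:ℝ) < x := lt_of_lt_of_le one_pos hx1
    have hre : x ^ (t:ℝ) = x ^ t := Real.rpow_natCast x t
    have hexp : Real.exp (-b * x) = Real.exp (-(b/2) * x) * Real.exp (-(b/2)*x) := by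
      rw [← Real.exp_add]; ring_nf
    rw [Real.norm_eq_abs, Real.norm_eq_abs]
    calc |x ^ t * Real.exp (-b*x)|
        = |x ^ (t:ℝ) * Real.exp (-(b/2)*x)| * |Real.exp (-(b/2)*x)| := by
          rw [← abs_mul, hre, hexp]; ring_nf
      _ ≤ 1 * |Real.exp (-(b/2) * x)| :=
          mul_le_mul_of_nonneg_right (le_of_lt hx) (abs_nonneg _)

lemma integral_pow_mul_exp (t : ℕ) {b : ℝ} (hb : 0 < b) :
    ∫ x in Set.Ioi (0:ℝ), x ^ t * Real.exp (-b * x)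
      = (Nat.factorial t : ℝ) / b ^ (t+1) := by
  have h := Real.integral_rpow_mul_exp_neg_mul_Ioi (a := (t:ℝ)+1) (r := b) (by positivity) hb
  rw [show ((t:ℝ)+1)-1 = (t:ℝ) by ring] at h
  rw [Real.Gamma_nat_eq_factorial] at h
  have heq : ∫ x in Set.Ioi (0:ℝ), x ^ t * Real.exp (-b * x)
      = ∫ x in Set.Ioi (0:ℝ), x ^ (t:ℝ) * Real.exp (-(b * x)) := by
    apply setIntegral_congr_fun measurableSet_Ioi
    intro x hx
    show x ^ t * Real.exp (-b * x) = x ^ (t:ℝ) * Real.exp (-(b * x))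
    rw [Real.rpow_natCast]
    ring_nf
  rw [heq, h]
  have h2 : (1/b:ℝ) ^ ((t:ℝ)+1) = (1/b)^(t+1 : ℕ) := by
    rw [← Real.rpow_natCast (1/b) (t+1)]
    norm_num
  rw [h2, div_pow, one_pow]
  ring

lemma rhs_expand (n m : ℕ) (hn : 1 ≤ n) (hm : 1 ≤ m) :
    (n:ℝ) * ∫ x in Set.Ioi (0:ℝ), (expS m x * Real.exp (-x)) ^ n
    = ∑ f ∈ Fintype.piFinset (fun _ : Fin n => Finset.range m),
        ((∑ j, f j).factorial : ℝ) / (∏ j, ((f j).factorial : ℝ))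
          * (1/(n:ℝ))^(∑ j, f j) := by
  have hn0 : (0:ℝ) < (n:ℝ) := by exact_mod_cast hn
  have hpt : ∀ x : ℝ, (expS m x * Real.exp (-x)) ^ n
      = ∑ f ∈ Fintype.piFinset (fun _ : Fin n => Finset.range m),
          (∏ j, (1:ℝ)/((f j).factorial)) * (x ^ (∑ j, f j) * Real.exp (-(n:ℝ) * x)) := by
    intro x
    rw [mul_pow]
    have hexp : Real.exp (-x) ^ n = Real.exp (-(n:ℝ) * x) := by
      rw [← Real.exp_nat_mul]
      ring_nf
    rw [hexp, expS, Finset.sum_pow', Finset.sum_mul]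
    refine Finset.sum_congr rfl fun f _ => ?_
    have : (∏ i, x ^ (f i) / ((f i).factorial:ℝ))
        = (∏ i, (1:ℝ)/((f i).factorial)) * x ^ (∑ i, f i) := by
      rw [← Finset.prod_pow_eq_pow_sum, ← Finset.prod_mul_distrib]
      exact Finset.prod_congr rfl fun i _ => by ring
    rw [this]
    ring
  have hint : ∀ f : Fin n → ℕ, IntegrableOn
      (fun x : ℝ => (∏ j, (1:ℝ)/((f j).factorial)) * (x ^ (∑ j, f j) * Real.exp (-(n:ℝ) * x)))
      (Set.Ioi 0) := by
    intro f
    exact (integrableOn_pow_mul_exp (∑ j, f j) hn0).const_mul _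
  have hswap : ∫ x in Set.Ioi (0:ℝ), (expS m x * Real.exp (-x)) ^ n
      = ∑ f ∈ Fintype.piFinset (fun _ : Fin n => Finset.range m),
          (∏ j, (1:ℝ)/((f j).factorial)) * ∫ x in Set.Ioi (0:ℝ),
            x ^ (∑ j, f j) * Real.exp (-(n:ℝ) * x) := by
    rw [show (fun x : ℝ => (expS m x * Real.exp (-x)) ^ n)
        = fun x : ℝ => ∑ f ∈ Fintype.piFinset (fun _ : Fin n => Finset.range m),
          (∏ j, (1:ℝ)/((f j).factorial)) * (x ^ (∑ j, f j) * Real.exp (-(n:ℝ) * x))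
      from funext hpt]
    rw [integral_finset_sum _ (fun f _ => hint f)]
    exact Finset.sum_congr rfl fun f _ => integral_const_mul _ _
  rw [hswap, Finset.mul_sum]
  refine Finset.sum_congr rfl fun f _ => ?_
  rw [integral_pow_mul_exp _ hn0]
  have hprod : (∏ j, (1:ℝ)/((f j).factorial)) = 1 / ∏ j, ((f j).factorial:ℝ) := by
    rw [Finset.prod_div_distrib, Finset.prod_const_one]
  have hPf : (∏ j, ((f j).factorial:ℝ)) ≠ 0 := by
    apply Finset.prod_ne_zero_iff.mpr
    intro j _
    exact_mod_cast (Nat.factorial_pos (f j)).ne'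
  rw [hprod, div_pow, one_pow]
  field_simp
  ring

lemma lhs_expand (n m : ℕ) (hn : 1 ≤ n) (hm : 1 ≤ m) :
    ∑ t ∈ Finset.range (n*(m-1)+1),
        ((Finset.univ.filter (fun g : Fin t → Fin n => ∀ c, cnt g c < m)).card : ℝ)
          * (1/(n:ℝ))^t
    = ∑ f ∈ Fintype.piFinset (fun _ : Fin n => Finset.range m),
        ((∑ j, f j).factorial : ℝ) / (∏ j, ((f j).factorial : ℝ))
          * (1/(n:ℝ))^(∑ j, f j) := by
  classical
  have step1 : ∀ t : ℕ,
      (Finset.univ.filter (fun g : Fin t → Fin n => ∀ c, cnt g c < m)).card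
        = ∑ f ∈ Fintype.piFinset (fun _ : Fin n => Finset.range m),
            (Finset.univ.filter (fun g : Fin t → Fin n => ∀ c, cnt g c = f c)).card := by
    intro t
    have hmap : ∀ g ∈ Finset.univ.filter (fun g : Fin t → Fin n => ∀ c, cnt g c < m),
        (fun c => cnt g c) ∈ Fintype.piFinset (fun _ : Fin n => Finset.range m) := by
      intro g hg
      rw [Finset.mem_filter] at hg
      exact Fintype.mem_piFinset.mpr fun c => Finset.mem_range.mpr (hg.2 c)
    rw [Finset.card_eq_sum_card_fiberwise hmap]
    refine Finset.sum_congr rfl fun f hf => ?_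
    congr 1
    ext g
    simp only [Finset.mem_filter, Finset.mem_univ, true_and]
    constructor
    · rintro ⟨h1, h2⟩
      intro c
      exact congrFun h2 c
    · intro h
      refine ⟨fun c => ?_, funext h⟩
      rw [h c]
      exact Finset.mem_range.mp (Fintype.mem_piFinset.mp hf c)
  have hsum_le : ∀ f ∈ Fintype.piFinset (fun _ : Fin n => Finset.range m),
      ∑ j, f j < n*(m-1)+1 := by
    intro f hf
    have : ∑ j, f j ≤ ∑ _j : Fin n, (m-1) := by
      apply Finset.sum_le_sum
      intro j _
      have := Finset.mem_range.mp (Fintype.mem_piFinset.mp hf j)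
      omega
    rw [Finset.sum_const, Finset.card_univ, Fintype.card_fin, smul_eq_mul] at this
    omega
  calc ∑ t ∈ Finset.range (n*(m-1)+1),
        ((Finset.univ.filter (fun g : Fin t → Fin n => ∀ c, cnt g c < m)).card : ℝ)
          * (1/(n:ℝ))^t
      = ∑ t ∈ Finset.range (n*(m-1)+1), ∑ f ∈ Fintype.piFinset (fun _ : Fin n => Finset.range m),
          ((Finset.univ.filter (fun g : Fin t → Fin n => ∀ c, cnt g c = f c)).card : ℝ)
            * (1/(n:ℝ))^t := by
        refine Finset.sum_congr rfl fun t _ => ?_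
        rw [step1 t]
        push_cast
        rw [Finset.sum_mul]
    _ = ∑ f ∈ Fintype.piFinset (fun _ : Fin n => Finset.range m),
          ∑ t ∈ Finset.range (n*(m-1)+1),
          ((Finset.univ.filter (fun g : Fin t → Fin n => ∀ c, cnt g c = f c)).card : ℝ)
            * (1/(n:ℝ))^t := Finset.sum_comm
    _ = ∑ f ∈ Fintype.piFinset (fun _ : Fin n => Finset.range m),
          ((∑ j, f j).factorial : ℝ) / (∏ j, ((f j).factorial : ℝ))
            * (1/(n:ℝ))^(∑ j, f j) := by
        refine Finset.sum_congr rfl fun f hf => ?_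
        rw [Finset.sum_eq_single_of_mem (∑ j, f j) (Finset.mem_range.mpr (hsum_le f hf))]
        · congr 1
          have hcnt := card_cnt_eq (∑ j, f j) f rfl
          have hPf : (∏ j, ((f j).factorial:ℝ)) ≠ 0 := by
            apply Finset.prod_ne_zero_iff.mpr
            intro j _
            exact_mod_cast (Nat.factorial_pos (f j)).ne'
          rw [eq_div_iff hPf]
          exact_mod_cast hcnt
        · intro t _ hne
          have : (Finset.univ.filter (fun g : Fin t → Fin n => ∀ c, cnt g c = f c)) = ∅ := by
            apply Finset.eq_empty_of_forall_notMem
            intro g hg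
            rw [Finset.mem_filter] at hg
            apply hne
            rw [← cnt_sum g]
            exact Finset.sum_congr rfl fun c _ => hg.2 c
          rw [this]
          simp

lemma enn_cast_eq_tsum (k : ℕ) :
    (k : ENNReal) = ∑' t : ℕ, if t < k then (1:ENNReal) else 0 := by
  rw [tsum_eq_sum (s := Finset.range k)
    (fun t ht => if_neg (fun h => ht (Finset.mem_range.mpr h)))]
  rw [Finset.sum_congr rfl (fun t ht => if_pos (Finset.mem_range.mp ht))]
  rw [Finset.sum_const, Finset.card_range, nsmul_eq_mul, mul_one]

end Aux

/-- Coupons of `n` equally likely types are drawn i.i.d. uniformly.  The expected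
number of samples `T` until some coupon type has been drawn `m` times equals
`n ∫_0^∞ (S_m(x) e^{-x})^n dx`. -/
theorem stmt_15 (n m : ℕ) (hn : 1 ≤ n) (hm : 1 ≤ m)
    [mFin : MeasurableSpace (Fin n)] (hmFin : mFin = ⊤)
    (μ : Measure (ℕ → Fin n)) [IsProbabilityMeasure μ]
    (hiid : ∀ (S : Finset ℕ) (v : ℕ → Fin n),
      μ {ω | ∀ i ∈ S, ω i = v i} = ((1 : ENNReal) / (n : ENNReal)) ^ S.card) :
    ∫⁻ ω, ((sInf {t : ℕ | ∃ c : Fin n,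
          m ≤ ((Finset.range t).filter (fun i => ω i = c)).card} : ℕ) : ENNReal) ∂μ
      = ENNReal.ofReal
          ((n : ℝ) * ∫ x in Set.Ioi (0 : ℝ), (expS m x * Real.exp (-x)) ^ n) := by
  classical
  subst hmFin
  have hms : ∀ s : Set (Fin n), MeasurableSet s := fun s => trivial
  have hn0 : 0 < n := hn
  set T : (ℕ → Fin n) → ℕ := fun ω => sInf {t : ℕ | ∃ c : Fin n,
      m ≤ ((Finset.range t).filter (fun i => ω i = c)).card} with hT
  set A : ℕ → Set (ℕ → Fin n) := fun t =>
      {ω : ℕ → Fin n | ∀ c, ((Finset.range t).filter (fun i => ω i = c)).card < m} with hA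
  have hAt : ∀ t : ℕ, {ω : ℕ → Fin n | t < T ω} = A t := by
    intro t
    ext ω
    exact tail_iff hn0 hm ω t
  have hAmeas : ∀ t : ℕ, MeasurableSet (A t) := by
    intro t
    rw [show A t = {ω : ℕ → Fin n |
        ∀ c, ((Finset.range t).filter (fun i => ω i = c)).card < m} from rfl, event_eq hn0]
    exact (Finset.univ.filter (fun g : Fin t → Fin n => ∀ c, cnt g c < m)).measurableSet_biUnion
      (fun g _ => cyl_measurable hms _)
  have hlhs : ∫⁻ ω, ((T ω : ℕ) : ENNReal) ∂μ = ∑' t : ℕ, μ (A t) := by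
    have hptw : ∀ ω, ((T ω : ℕ) : ENNReal)
        = ∑' t : ℕ, Set.indicator (A t) (fun _ => (1:ENNReal)) ω := by
      intro ω
      rw [enn_cast_eq_tsum]
      refine tsum_congr fun t => ?_
      by_cases h : t < T ω
      · rw [if_pos h, Set.indicator_of_mem (by rw [← hAt t]; exact h)]
      · rw [if_neg h, Set.indicator_of_notMem (by rw [← hAt t]; exact h)]
    rw [lintegral_congr hptw,
      lintegral_tsum (fun t => (measurable_const.indicator (hAmeas t)).aemeasurable)]
    refine tsum_congr fun t => ?_
    rw [lintegral_indicator_const (hAmeas t), one_mul]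
  have hmu : ∀ t : ℕ, μ (A t)
      = ((Finset.univ.filter (fun g : Fin t → Fin n => ∀ c, cnt g c < m)).card : ENNReal)
        * ((1 : ENNReal) / (n : ENNReal)) ^ t := by
    intro t
    exact event_measure hms hn0 μ hiid
  have hzero : ∀ t : ℕ, n*(m-1)+1 ≤ t →
      (Finset.univ.filter (fun g : Fin t → Fin n => ∀ c, cnt g c < m)) = ∅ := by
    intro t ht
    apply Finset.eq_empty_of_forall_notMem
    intro g hg
    rw [Finset.mem_filter] at hg
    obtain ⟨c, hc⟩ := pigeon hm (by omega) g
    exact absurd (hg.2 c) (by omega)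
  have htrunc : ∑' t : ℕ, μ (A t) = ∑ t ∈ Finset.range (n*(m-1)+1), μ (A t) := by
    apply tsum_eq_sum
    intro t ht
    rw [hmu t, hzero t (Nat.le_of_not_lt (fun h => ht (Finset.mem_range.mpr h)))]
    simp
  -- convert each ENNReal term to ofReal
  have hofreal : ∀ t : ℕ, μ (A t) = ENNReal.ofReal
      (((Finset.univ.filter (fun g : Fin t → Fin n => ∀ c, cnt g c < m)).card : ℝ)
        * (1/(n:ℝ))^t) := by
    intro t
    rw [hmu t]
    have h1 : ((1 : ENNReal) / (n : ENNReal)) = ENNReal.ofReal (1/(n:ℝ)) := by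
      rw [one_div, one_div, ← ENNReal.ofReal_natCast n,
        ENNReal.ofReal_inv_of_pos (by exact_mod_cast hn0)]
    rw [h1, ← ENNReal.ofReal_pow (by positivity), ← ENNReal.ofReal_natCast,
      ← ENNReal.ofReal_mul (by positivity)]
  rw [hlhs, htrunc]
  rw [Finset.sum_congr rfl (fun t _ => hofreal t)]
  rw [← ENNReal.ofReal_sum_of_nonneg (fun t _ => by positivity)]
  congr 1
  rw [lhs_expand n m hn hm, rhs_expand n m hn hm]
end

section
/- The double collection identity: the expected number of uniform samples from n coupon types until every type has been collected at least m times equals n ∫_0^∞ [1 - (1 - S_m(x)e^{-x})^n] dx. -/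
/-!
Let `A_t` be the number of words of length `t` over the `n` types in which every type occurs at
least `m` times. Then `P(T > t) = 1 - A_t / n ^ t`, and `E[T] = ∑_t P(T > t)` as soon as this sum
is finite. Splitting a word according to the set of positions of its last type gives the recursion
`A^{(n+1)}_t = ∑_{k ≥ m} (t choose k) A^{(n)}_{t-k}`, that is, the exponential generating
function `∑_t A_t x^t / t! = (e^x - S_m(x))^n`. Multiplying by `e^{-n x}` turns this into
`n (1 - (1 - S_m(x) e^{-x})^n) = ∑_t P(T > t) · n^{t+1} x^t e^{-n x} / t!`,
a mixture of Gamma(t + 1, n) densities, each of which integrates to one over `(0, ∞)`.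
Finiteness comes from Bernoulli's inequality `1 - (1 - u)^n ≤ n u` and `∫ S_m(x) e^{-x} dx = m`.
-/

open MeasureTheory

namespace CollectorsBrotherhood

open Finset Set
open scoped ENNReal

section FullMaps

def fullMaps (m : ℕ) (α β : Type*) [Fintype α] [DecidableEq α] [Fintype β] [DecidableEq β] :
    Finset (α → β) :=
  {f | ∀ b, m ≤ #{a | f a = b}}

variable {α β : Type*} [Fintype α] [DecidableEq α]

lemma mem_fullMaps [Fintype β] [DecidableEq β] {m : ℕ} {f : α → β} :
    f ∈ fullMaps m α β ↔ ∀ b, m ≤ #{a | f a = b} := by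
  simp [fullMaps]

lemma card_fullMaps_le [Fintype β] [DecidableEq β] (m : ℕ) :
    #(fullMaps m α β) ≤ Fintype.card β ^ Fintype.card α :=
  (card_filter_le _ _).trans (by simp)

lemma card_fullMaps_of_isEmpty [Fintype β] [DecidableEq β] [IsEmpty β] (m : ℕ) :
    #(fullMaps m α β) = 0 ^ Fintype.card α := by
  simp [fullMaps]

lemma card_fullMaps_congr {α' β' : Type*} [Fintype α'] [DecidableEq α'] [Fintype β]
    [DecidableEq β] [Fintype β'] [DecidableEq β']
    (m : ℕ) (e₁ : α ≃ α') (e₂ : β ≃ β') :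
    #(fullMaps m α β) = #(fullMaps m α' β') := by
  refine card_equiv (e₁.arrowCongr e₂) fun f => ?_
  simp only [mem_fullMaps, Equiv.arrowCongr_apply, Function.comp_apply, e₂.forall_congr_left]
  refine forall_congr' fun b => ?_
  rw [card_equiv e₁ (t := {a' | e₂ (f (e₁.symm a')) = b})
    (fun a => by simp [Equiv.eq_symm_apply])]

def extendNone (s : Finset α) (g : ↥sᶜ → β) (a : α) : Option β :=
  if h : a ∈ s then none else some (g ⟨a, mem_compl.2 h⟩)

lemma extendNone_eq_none_iff {s : Finset α} {g : ↥sᶜ → β} {a : α} :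
    extendNone s g a = none ↔ a ∈ s := by
  unfold extendNone; split_ifs with h <;> simp [h]

lemma card_extendNone_eq_some [DecidableEq β] (s : Finset α) (g : ↥sᶜ → β) (b : β) :
    #{a | extendNone s g a = some b} = #{a | g a = b} := by
  rw [← card_map (Function.Embedding.subtype _)]
  congr 1
  ext a
  by_cases h : a ∈ s <;> simp [extendNone, h]

lemma extendNone_injective (s : Finset α) :
    Function.Injective (extendNone s : (↥sᶜ → β) → α → Option β) := by
  intro g g' h
  funext a
  simpa [extendNone, mem_compl.1 a.2] using congrFun h a

lemma exists_extendNone_eq {s : Finset α} {f : α → Option β} (hf : ∀ a, f a = none ↔ a ∈ s) :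
    ∃ g, extendNone s g = f := by
  refine ⟨fun a => (f a).get (Option.isSome_iff_ne_none.2 fun h => mem_compl.1 a.2 ((hf a).1 h)),
    funext fun a => ?_⟩
  by_cases h : a ∈ s
  · simp [extendNone, h, (hf a).2 h]
  · simp [extendNone, h]

lemma card_fullMaps_option_fiber [Fintype β] [DecidableEq β] (m : ℕ) (s : Finset α) :
    #{f ∈ fullMaps m α (Option β) | ({a | f a = none} : Finset α) = s} =
      if m ≤ #s then #(fullMaps m ↥sᶜ β) else 0 := by
  split_ifs with hs
  · symm
    refine card_bij (fun g _ => extendNone s g) (fun g hg => ?_)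
      (fun g _ g' _ h => extendNone_injective s h) (fun f hf => ?_)
    · have hfib : ({a | extendNone s g a = none} : Finset α) = s := by
        ext a; simp [extendNone_eq_none_iff]
      refine mem_filter.2 ⟨mem_fullMaps.2 fun b => ?_, hfib⟩
      cases b with
      | none => rwa [hfib]
      | some b => rw [card_extendNone_eq_some]; exact mem_fullMaps.1 hg b
    · obtain ⟨hf, hfs⟩ := mem_filter.1 hf
      obtain ⟨g, rfl⟩ := exists_extendNone_eq (s := s) (f := f) fun a => by simp [← hfs]
      refine ⟨g, mem_fullMaps.2 fun b => ?_, rfl⟩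
      rw [← card_extendNone_eq_some]
      exact mem_fullMaps.1 hf (some b)
  · rw [card_eq_zero, filter_eq_empty_iff]
    intro f hf hfs
    exact hs (hfs ▸ mem_fullMaps.1 hf none)

lemma card_fullMaps_option [Fintype β] [DecidableEq β] (m : ℕ) :
    #(fullMaps m α (Option β)) = ∑ k ∈ range (Fintype.card α + 1),
      (Fintype.card α).choose k *
        if m ≤ k then #(fullMaps m (Fin (Fintype.card α - k)) β) else 0 := by
  rw [card_eq_sum_card_fiberwise (f := fun f => ({a | f a = none} : Finset α)) (t := univ)
    (fun _ _ => mem_univ _)]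
  simp_rw [card_fullMaps_option_fiber]
  have hcompl (s : Finset α) :
      #(fullMaps m ↥sᶜ β) = #(fullMaps m (Fin (Fintype.card α - #s)) β) :=
    card_fullMaps_congr m (Fintype.equivFinOfCardEq (by rw [Fintype.card_coe, card_compl]))
      (Equiv.refl β)
  simp_rw [hcompl]
  rw [← Finset.powerset_univ, sum_powerset_apply_card
    (fun k => if m ≤ k then #(fullMaps m (Fin (Fintype.card α - k)) β) else 0), card_univ]
  simp_rw [smul_eq_mul]

end FullMaps

section GeneratingFunction

open Nat Real

lemma hasSum_tail_exp (m : ℕ) (x : ℝ) :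
    HasSum (fun k => if m ≤ k then x ^ k / k ! else 0) (exp x - expS m x) := by
  have hexp : HasSum (fun k => x ^ k / k !) (exp x) := by
    rw [exp_eq_exp_ℝ]; exact NormedSpace.expSeries_div_hasSum_exp x
  have hhead : HasSum (fun k => if k < m then x ^ k / k ! else 0) (expS m x) := by
    have : HasSum (fun k => if k < m then x ^ k / k ! else 0)
        (∑ k ∈ range m, if k < m then x ^ k / k ! else 0) :=
      hasSum_sum_of_ne_finset_zero fun k hk => if_neg (by simpa using hk)
    rwa [sum_congr rfl fun k hk => if_pos (mem_range.1 hk)] at this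
  exact (hexp.sub hhead).congr_fun fun k => by split_ifs <;> first | omega | ring

lemma summable_norm_tail_exp (m : ℕ) (x : ℝ) :
    Summable fun k => ‖if m ≤ k then x ^ k / k ! else 0‖ := by
  refine .of_nonneg_of_le (fun _ => norm_nonneg _) (fun k => ?_) (summable_pow_div_factorial |x|)
  split_ifs
  · simp
  · simp only [norm_zero]; positivity

lemma summable_norm_card_fullMaps (m n : ℕ) (x : ℝ) :
    Summable fun t => ‖(#(fullMaps m (Fin t) (Fin n)) : ℝ) * x ^ t / (t ! : ℝ)‖ := by
  refine .of_nonneg_of_le (fun _ => norm_nonneg _) (fun t => ?_)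
    (summable_pow_div_factorial (n * |x|))
  have hcard : (#(fullMaps m (Fin t) (Fin n)) : ℝ) ≤ n ^ t := by
    exact_mod_cast (card_fullMaps_le m).trans_eq (by simp)
  rw [norm_div, norm_mul, Real.norm_natCast, Real.norm_natCast, norm_pow, Real.norm_eq_abs,
    mul_pow]
  gcongr

theorem hasSum_card_fullMaps (m n : ℕ) (x : ℝ) :
    HasSum (fun t => (#(fullMaps m (Fin t) (Fin n)) : ℝ) * x ^ t / t !)
      ((exp x - expS m x) ^ n) := by
  induction n with
  | zero =>
    simp_rw [card_fullMaps_of_isEmpty, Fintype.card_fin, pow_zero]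
    refine (hasSum_ite_eq 0 (1 : ℝ)).congr_fun fun t => ?_
    cases t <;> simp
  | succ n ih =>
    have hprod := hasSum_sum_range_mul_of_summable_norm (summable_norm_tail_exp m x)
      (summable_norm_card_fullMaps m n x)
    rw [(hasSum_tail_exp m x).tsum_eq, ih.tsum_eq, mul_comm, ← pow_succ] at hprod
    refine hprod.congr_fun fun t => ?_
    rw [card_fullMaps_congr m (Equiv.refl _) finSuccEquivLast, card_fullMaps_option,
      Fintype.card_fin, Nat.cast_sum, sum_mul, sum_div]
    refine sum_congr rfl fun k hk => ?_
    have hkt : k ≤ t := Nat.lt_succ_iff.1 (mem_range.1 hk)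
    split_ifs
    · rw [Nat.cast_mul, Nat.cast_choose ℝ hkt, ← pow_mul_pow_sub x hkt]
      field_simp
    · simp

end GeneratingFunction

section Integral

open Nat Real ProbabilityTheory

lemma gammaPDFReal_natCast_add_one (t : ℕ) (r : ℝ) {x : ℝ} (hx : 0 ≤ x) :
    gammaPDFReal (t + 1) r x = r ^ (t + 1) * x ^ t / t ! * exp (-(r * x)) := by
  rw [gammaPDFReal, if_pos hx, Gamma_nat_eq_factorial, add_sub_cancel_right, rpow_natCast,
    ← Nat.cast_add_one, rpow_natCast]
  ring

lemma setLIntegral_Ioi_gammaPDF {a r : ℝ} (ha : 0 < a) (hr : 0 < r) :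
    ∫⁻ x in Ioi 0, gammaPDF a r x = 1 := by
  rw [setLIntegral_congr Ioi_ae_eq_Ici, setLIntegral_eq_of_support_subset,
    lintegral_gammaPDF_eq_one ha hr]
  intro x hx
  by_contra h
  exact hx (gammaPDF_of_neg (not_le.1 h))

lemma exp_neg_mul_sub_expS_pow (m n : ℕ) (x : ℝ) :
    exp (-(n * x)) * (exp x - expS m x) ^ n = (1 - expS m x * exp (-x)) ^ n := by
  rw [neg_mul_eq_mul_neg, exp_nat_mul, ← mul_pow, mul_sub, ← exp_add, neg_add_cancel,
    exp_zero, mul_comm]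

/-- `P(T > t)`. -/
noncomputable def tailProb (m n t : ℕ) : ℝ :=
  1 - #(fullMaps m (Fin t) (Fin n)) / (n : ℝ) ^ t

lemma tailProb_nonneg (m n t : ℕ) : 0 ≤ tailProb m n t := by
  refine sub_nonneg.2 (div_le_one_of_le₀ ?_ (by positivity))
  exact_mod_cast (card_fullMaps_le m).trans_eq (by simp)

theorem hasSum_tailProb_mul_gammaPDFReal (m : ℕ) {n : ℕ} (hn : n ≠ 0) {x : ℝ}
    (hx : 0 ≤ x) :
    HasSum (fun t => tailProb m n t * gammaPDFReal (t + 1) n x)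
      (n * (1 - (1 - expS m x * exp (-x)) ^ n)) := by
  have hexp : HasSum (fun t : ℕ => gammaPDFReal (t + 1) n x) n := by
    have := (NormedSpace.expSeries_div_hasSum_exp (n * x)).mul_left (n * exp (-(n * x)))
    rw [← exp_eq_exp_ℝ, mul_assoc, ← exp_add, neg_add_cancel, exp_zero, mul_one] at this
    refine this.congr_fun fun t => ?_
    rw [gammaPDFReal_natCast_add_one t n hx]
    ring
  have hfull : HasSum (fun t => #(fullMaps m (Fin t) (Fin n)) / (n : ℝ) ^ t *
      gammaPDFReal (t + 1) n x) (n * (1 - expS m x * exp (-x)) ^ n) := by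
    have := (hasSum_card_fullMaps m n x).mul_left (n * exp (-(n * x)))
    rw [mul_assoc, exp_neg_mul_sub_expS_pow] at this
    refine this.congr_fun fun t => ?_
    rw [gammaPDFReal_natCast_add_one t n hx]
    field_simp
    ring
  rw [mul_one_sub]
  exact (hexp.sub hfull).congr_fun fun t => by rw [tailProb]; ring

theorem setLIntegral_eq_tsum_tailProb (m : ℕ) {n : ℕ} (hn : n ≠ 0) :
    ∫⁻ x in Ioi 0, ENNReal.ofReal (n * (1 - (1 - expS m x * exp (-x)) ^ n)) =
      ∑' t, ENNReal.ofReal (tailProb m n t) := by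
  have hn' : (0 : ℝ) < n := by positivity
  have hmeas (a r : ℝ) : Measurable (gammaPDF a r) := (measurable_gammaPDFReal a r).ennreal_ofReal
  calc
    _ = ∫⁻ x in Ioi 0, ∑' t : ℕ,
        ENNReal.ofReal (tailProb m n t) * gammaPDF (t + 1) n x := by
      refine setLIntegral_congr_fun measurableSet_Ioi fun x hx => ?_
      have hsum := hasSum_tailProb_mul_gammaPDFReal m hn (le_of_lt hx)
      rw [← hsum.tsum_eq, ENNReal.ofReal_tsum_of_nonneg (fun t => mul_nonneg
        (tailProb_nonneg m n t) (gammaPDFReal_nonneg (by positivity) hn' x)) hsum.summable]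
      simp_rw [ENNReal.ofReal_mul (tailProb_nonneg m n _), gammaPDF]
    _ = ∑' t : ℕ,
        ENNReal.ofReal (tailProb m n t) * ∫⁻ x in Ioi 0, gammaPDF (t + 1) n x := by
      rw [lintegral_tsum fun t => ((hmeas _ _).const_mul _).aemeasurable]
      simp_rw [lintegral_const_mul _ (hmeas _ _)]
    _ = _ := tsum_congr fun t => by rw [setLIntegral_Ioi_gammaPDF (by positivity) hn', mul_one]

lemma expS_mul_exp_neg_eq_sum_gammaPDFReal (m : ℕ) {x : ℝ} (hx : 0 ≤ x) :
    expS m x * exp (-x) = ∑ i ∈ range m, gammaPDFReal (i + 1) 1 x := by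
  rw [expS, sum_mul]
  refine sum_congr rfl fun i _ => ?_
  rw [gammaPDFReal_natCast_add_one i 1 hx]
  simp

lemma expS_mul_exp_neg_le_one (m : ℕ) {x : ℝ} (hx : 0 ≤ x) : expS m x * exp (-x) ≤ 1 :=
  calc expS m x * exp (-x) ≤ exp x * exp (-x) := by gcongr; exact sum_le_exp_of_nonneg hx m
    _ = 1 := by rw [← exp_add, add_neg_cancel, exp_zero]

lemma one_sub_one_sub_pow_le {u : ℝ} (hu : u ≤ 2) (n : ℕ) : 1 - (1 - u) ^ n ≤ n * u := by
  have := one_add_mul_le_pow (a := -u) (by linarith) n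
  rw [← sub_eq_add_neg] at this
  linarith

theorem setLIntegral_le (m n : ℕ) :
    ∫⁻ x in Ioi 0, ENNReal.ofReal (n * (1 - (1 - expS m x * exp (-x)) ^ n)) ≤
      ENNReal.ofReal (n ^ 2) * m := by
  have hmeas (i : ℕ) : Measurable (gammaPDF (i + 1) 1) :=
    (measurable_gammaPDFReal _ _).ennreal_ofReal
  have hbound {x : ℝ} (hx : 0 ≤ x) :
      n * (1 - (1 - expS m x * exp (-x)) ^ n) ≤ n ^ 2 * (expS m x * exp (-x)) := by
    rw [pow_two, mul_assoc]
    gcongr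
    exact one_sub_one_sub_pow_le (by linarith [expS_mul_exp_neg_le_one m hx]) n
  calc
    _ ≤ ∫⁻ x in Ioi 0, ∑ i ∈ range m, ENNReal.ofReal (n ^ 2) * gammaPDF (i + 1) 1 x := by
      refine setLIntegral_mono' measurableSet_Ioi fun x hx => ?_
      refine (ENNReal.ofReal_le_ofReal (hbound (le_of_lt hx))).trans_eq ?_
      rw [expS_mul_exp_neg_eq_sum_gammaPDFReal m (le_of_lt hx), ENNReal.ofReal_mul (by positivity),
        ENNReal.ofReal_sum_of_nonneg fun i _ => gammaPDFReal_nonneg (by positivity) one_pos x,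
        mul_sum]
      rfl
    _ = ∑ i ∈ range m, ENNReal.ofReal (n ^ 2) * ∫⁻ x in Ioi 0, gammaPDF (i + 1) 1 x := by
      rw [lintegral_finsetSum _ fun i _ => (hmeas i).const_mul _]
      simp_rw [lintegral_const_mul _ (hmeas _)]
    _ = _ := by
      rw [sum_congr rfl fun i _ => by rw [setLIntegral_Ioi_gammaPDF (by positivity) one_pos],
        sum_const, card_range, nsmul_eq_mul, mul_one, mul_comm]

lemma tsum_tailProb_ne_top (m : ℕ) {n : ℕ} (hn : n ≠ 0) :
    ∑' t, ENNReal.ofReal (tailProb m n t) ≠ ∞ := by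
  rw [← setLIntegral_eq_tsum_tailProb m hn]
  exact ne_top_of_le_ne_top (by finiteness) (setLIntegral_le m n)

theorem ofReal_mul_integral_eq_tsum_tailProb (m : ℕ) {n : ℕ} (hn : n ≠ 0) :
    ENNReal.ofReal (n * ∫ x in Ioi 0, (1 - (1 - expS m x * exp (-x)) ^ n)) =
      ∑' t, ENNReal.ofReal (tailProb m n t) := by
  have hcont : Continuous fun x => (n : ℝ) * (1 - (1 - expS m x * exp (-x)) ^ n) := by
    unfold expS; fun_prop
  rw [← integral_const_mul, integral_eq_lintegral_of_nonneg_ae,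
    setLIntegral_eq_tsum_tailProb m hn, ENNReal.ofReal_toReal (tsum_tailProb_ne_top m hn)]
  · refine (ae_restrict_iff' measurableSet_Ioi).2 (ae_of_all _ fun x hx => ?_)
    exact (hasSum_tailProb_mul_gammaPDFReal m hn (le_of_lt hx)).nonneg fun t =>
      mul_nonneg (tailProb_nonneg m n t) (gammaPDFReal_nonneg (by positivity) (by positivity) x)
  · exact hcont.aestronglyMeasurable

end Integral

section HittingTime

variable {Ω : Type*}

lemma setOf_lt_sInf_mem_eq {E : ℕ → Set Ω} (hmono : Monotone E) (t : ℕ) :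
    {ω | t < sInf {s | ω ∈ E s}} = (⋃ s, E s) \ E t := by
  ext ω
  simp only [mem_ofPred_eq, mem_sdiff, mem_iUnion]
  constructor
  · intro h
    have hne : {s | ω ∈ E s}.Nonempty := by
      by_contra he
      rw [not_nonempty_iff_eq_empty.1 he, Nat.sInf_empty] at h
      exact Nat.not_lt_zero t h
    exact ⟨hne, fun ht => (Nat.sInf_le ht).not_gt h⟩
  · rintro ⟨hne, hnot⟩
    by_contra! h
    exact hnot (hmono h (Nat.sInf_mem hne))

variable [MeasurableSpace Ω] {μ : Measure Ω}

lemma lintegral_natCast_eq_tsum_measure_lt {f : Ω → ℕ}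
    (hf : ∀ t, MeasurableSet {ω | t < f ω}) :
    ∫⁻ ω, (f ω : ℝ≥0∞) ∂μ = ∑' t, μ {ω | t < f ω} := by
  have hsum (ω : Ω) : (f ω : ℝ≥0∞) = ∑' t, {ω | t < f ω}.indicator 1 ω := by
    rw [tsum_eq_sum (s := range (f ω)) fun t ht => indicator_of_notMem (by simpa using ht) _,
      sum_congr rfl fun t ht => indicator_of_mem (by simpa using ht) _]
    simp
  simp_rw [hsum]
  rw [lintegral_tsum fun t => (measurable_one.indicator (hf t)).aemeasurable]
  exact tsum_congr fun t => lintegral_indicator_one (hf t)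

theorem lintegral_sInf_eq_tsum_measure_compl {E : ℕ → Set Ω} (hmono : Monotone E)
    (hmeas : ∀ t, MeasurableSet (E t)) (hsum : ∑' t, μ (E t)ᶜ ≠ ∞) :
    ∫⁻ ω, (sInf {t | ω ∈ E t} : ℕ) ∂μ = ∑' t, μ (E t)ᶜ := by
  -- `sInf ∅ = 0` on the event that `E` is never entered, so that event has to be null.
  have hnull : μ (⋃ t, E t)ᶜ = 0 :=
    le_antisymm (ge_of_tendsto' (ENNReal.tendsto_atTop_zero_of_tsum_ne_top hsum)
      fun t => measure_mono (compl_subset_compl.2 (subset_iUnion E t))) bot_le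
  rw [lintegral_natCast_eq_tsum_measure_lt fun t => by
    rw [setOf_lt_sInf_mem_eq hmono]; exact (MeasurableSet.iUnion hmeas).diff (hmeas t)]
  refine tsum_congr fun t => ?_
  rw [setOf_lt_sInf_mem_eq hmono, sdiff_eq, inter_comm, measure_inter_conull hnull]

end HittingTime

section Sampling

variable {β : Type*} [Fintype β] [MeasurableSpace β] [DiscreteMeasurableSpace β]
  {μ : Measure (ℕ → β)}

lemma measure_prefix_mem [Nonempty β]
    (hiid : ∀ (S : Finset ℕ) (v : ℕ → β),
      μ {ω | ∀ i ∈ S, ω i = v i} = ((1 : ℝ≥0∞) / Fintype.card β) ^ S.card)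
    (t : ℕ) (G : Finset (Fin t → β)) :
    μ {ω | (fun i : Fin t => ω i) ∈ G} = #G * (Fintype.card β : ℝ≥0∞)⁻¹ ^ t := by
  let p : (ℕ → β) → Fin t → β := fun ω i => ω i
  have hp : Measurable p := measurable_pi_lambda _ fun i => measurable_pi_apply _
  have hcyl (g : Fin t → β) : μ (p ⁻¹' {g}) = (Fintype.card β : ℝ≥0∞)⁻¹ ^ t := by
    let v : ℕ → β := fun j => if h : j < t then g ⟨j, h⟩ else Classical.arbitrary β
    have hpre : p ⁻¹' {g} = {ω | ∀ i ∈ range t, ω i = v i} := by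
      ext ω
      simp only [p, v, Set.mem_preimage, mem_singleton_iff, funext_iff, Fin.forall_iff,
        Finset.mem_range, mem_ofPred_eq]
      exact forall₂_congr fun i h => by rw [dif_pos h]
    rw [hpre, hiid, card_range, one_div]
  calc μ (p ⁻¹' G) = μ.map p G := (Measure.map_apply hp G.finite_toSet.measurableSet).symm
    _ = ∑ g ∈ G, μ.map p {g} := sum_measure_singleton.symm
    _ = _ := by
      rw [sum_congr rfl fun g _ => by rw [Measure.map_apply hp (measurableSet_singleton g), hcyl],
        sum_const, nsmul_eq_mul]

end Sampling

section Collection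

variable {β : Type*} [DecidableEq β]

def collectedBy (m t : ℕ) : Set (ℕ → β) := {ω | ∀ c, m ≤ #{i ∈ range t | ω i = c}}

lemma collectedBy_mono (m : ℕ) : Monotone (collectedBy (β := β) m) :=
  fun _ _ hst _ hω c => (hω c).trans (card_le_card (filter_subset_filter _ (range_mono hst)))

variable [Fintype β]

lemma card_filter_range_eq_card_filter_fin (t : ℕ) (p : ℕ → Prop) [DecidablePred p] :
    #{i ∈ range t | p i} = #{i : Fin t | p i} := by
  rw [← card_map Fin.valEmbedding]
  congr 1
  ext i
  simp [Fin.exists_iff, and_comm]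

lemma collectedBy_eq_preimage (m t : ℕ) :
    collectedBy m t = {ω : ℕ → β | (fun i : Fin t => ω i) ∈ fullMaps m (Fin t) β} := by
  ext ω
  simp [collectedBy, fullMaps, card_filter_range_eq_card_filter_fin]

variable [MeasurableSpace β] [DiscreteMeasurableSpace β]

lemma measurableSet_collectedBy (m t : ℕ) : MeasurableSet (collectedBy (β := β) m t) := by
  rw [collectedBy_eq_preimage]
  exact measurable_pi_lambda _ (fun i => measurable_pi_apply _) (finite_toSet _).measurableSet

lemma measure_compl_collectedBy [Nonempty β] {μ : Measure (ℕ → β)} [IsProbabilityMeasure μ]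
    (hiid : ∀ (S : Finset ℕ) (v : ℕ → β),
      μ {ω | ∀ i ∈ S, ω i = v i} = ((1 : ℝ≥0∞) / Fintype.card β) ^ S.card)
    (m t : ℕ) :
    μ (collectedBy m t)ᶜ =
      ENNReal.ofReal (1 - #(fullMaps m (Fin t) β) / (Fintype.card β : ℝ) ^ t) := by
  rw [prob_compl_eq_one_sub (measurableSet_collectedBy m t), collectedBy_eq_preimage,
    measure_prefix_mem hiid, ENNReal.ofReal_sub _ (by positivity), ENNReal.ofReal_one,
    ENNReal.ofReal_div_of_pos (by positivity), ENNReal.ofReal_natCast, ENNReal.ofReal_pow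
    (by positivity), ENNReal.ofReal_natCast, div_eq_mul_inv, ENNReal.inv_pow]

end Collection

end CollectorsBrotherhood

open CollectorsBrotherhood ENNReal in
theorem stmt_16_general (n m : ℕ)
    [mFin : MeasurableSpace (Fin n)] (hmFin : mFin = ⊤)
    (μ : Measure (ℕ → Fin n)) [IsProbabilityMeasure μ]
    (hiid : ∀ (S : Finset ℕ) (v : ℕ → Fin n),
      μ {ω | ∀ i ∈ S, ω i = v i} = ((1 : ENNReal) / (n : ENNReal)) ^ S.card) :
    ∫⁻ ω, ((sInf {t : ℕ | ∀ c : Fin n,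
          m ≤ ((Finset.range t).filter (fun i => ω i = c)).card} : ℕ) : ENNReal) ∂μ
      = ENNReal.ofReal
          ((n : ℝ) * ∫ x in Set.Ioi (0 : ℝ),
            (1 - (1 - expS m x * Real.exp (-x)) ^ n)) := by
  subst hmFin
  obtain ⟨ω₀⟩ := nonempty_of_isProbabilityMeasure μ
  have : Nonempty (Fin n) := ⟨ω₀ 0⟩
  have hn : n ≠ 0 := (ω₀ 0).pos.ne'
  have hiid' (S : Finset ℕ) (v : ℕ → Fin n) : μ {ω | ∀ i ∈ S, ω i = v i} =
      ((1 : ℝ≥0∞) / Fintype.card (Fin n)) ^ S.card := by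
    rw [Fintype.card_fin, hiid]
  have hcompl (t : ℕ) : μ (collectedBy m t)ᶜ = ENNReal.ofReal (tailProb m n t) := by
    have := measure_compl_collectedBy hiid' m t
    rwa [Fintype.card_fin] at this
  have hfin : ∑' t, μ (collectedBy m t)ᶜ ≠ ∞ := by
    rw [tsum_congr hcompl]
    exact tsum_tailProb_ne_top m hn
  rw [ofReal_mul_integral_eq_tsum_tailProb m hn, ← tsum_congr hcompl]
  exact lintegral_sInf_eq_tsum_measure_compl (collectedBy_mono m) (measurableSet_collectedBy m) hfin

/-- Double dixie cup / collector's brotherhood: coupons of `n` equally likely types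
are drawn i.i.d. uniformly.  The expected number of samples `T` until every type has
been drawn at least `m` times equals `n ∫_0^∞ (1 - (1 - S_m(x) e^{-x})^n) dx`. -/
theorem stmt_16 (n m : ℕ) (hn : 1 ≤ n) (hm : 1 ≤ m)
    [mFin : MeasurableSpace (Fin n)] (hmFin : mFin = ⊤)
    (μ : Measure (ℕ → Fin n)) [IsProbabilityMeasure μ]
    (hiid : ∀ (S : Finset ℕ) (v : ℕ → Fin n),
      μ {ω | ∀ i ∈ S, ω i = v i} = ((1 : ENNReal) / (n : ENNReal)) ^ S.card) :
    ∫⁻ ω, ((sInf {t : ℕ | ∀ c : Fin n,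
          m ≤ ((Finset.range t).filter (fun i => ω i = c)).card} : ℕ) : ENNReal) ∂μ
      = ENNReal.ofReal
          ((n : ℝ) * ∫ x in Set.Ioi (0 : ℝ),
            (1 - (1 - expS m x * Real.exp (-x)) ^ n)) :=
  stmt_16_general n m (mFin := mFin) hmFin μ hiid
end
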